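/- arXiv:1711.08719 — 2 statements merged into one kernel-verified Lean document; each statement's English description precedes it below -/
import Mathlib

section
/- Let a_m = Γ(m+1/2)·Γ(m+3/2)/(m!)². Then for all x with 0 ≤ x < 1, (1-x)·Σ_{m=0}^∞ a_m x^m ≤ a_0 = Γ(1/2)·Γ(3/2) = π/2. -/
open Real

noncomputable def aSeq (m : ℕ) : ℝ :=
  Real.Gamma (m + 1/2) * Real.Gamma (m + 3/2) / (Nat.factorial m : ℝ)^2

lemma aSeq_pos (m : ℕ) : 0 < aSeq m := by
  unfold aSeq
  apply div_pos
  · exact mul_pos (Real.Gamma_pos_of_pos (by positivity)) (Real.Gamma_pos_of_pos (by positivity))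
  · positivity

lemma aSeq_succ (m : ℕ) :
    aSeq (m + 1) = aSeq m * ((m + 1/2) * (m + 3/2) / (m + 1)^2) := by
  unfold aSeq
  have h1 : ((m : ℝ) + 1) + 1/2 = (m + 1/2) + 1 := by ring
  have h2 : ((m : ℝ) + 1) + 3/2 = (m + 3/2) + 1 := by ring
  rw [Nat.factorial_succ]
  push_cast
  rw [h1, h2, Real.Gamma_add_one (by positivity), Real.Gamma_add_one (by positivity)]
  have : (Nat.factorial m : ℝ) ≠ 0 := by positivity
  field_simp

lemma aSeq_antitone (m : ℕ) : aSeq (m + 1) ≤ aSeq m := by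
  rw [aSeq_succ]
  have h : ((m : ℝ) + 1/2) * (m + 3/2) / (m + 1)^2 ≤ 1 := by
    rw [div_le_one (by positivity)]
    nlinarith [Nat.cast_nonneg (α := ℝ) m]
  nlinarith [aSeq_pos m, aSeq_pos (m+1)]

lemma aSeq_le_zero (m : ℕ) : aSeq m ≤ aSeq 0 := by
  induction m with
  | zero => exact le_refl _
  | succ n ih => exact (aSeq_antitone n).trans ih

theorem abel_sum_le_pi_div_two :
    (∀ x : ℝ, 0 ≤ x → x < 1 → (1 - x) * ∑' m : ℕ, aSeq m * x ^ m ≤ aSeq 0) ∧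
    aSeq 0 = Real.Gamma (1/2) * Real.Gamma (3/2) ∧
    aSeq 0 = π / 2 := by
  refine ⟨?_, ?_, ?_⟩
  · intro x hx0 hx1
    have hgeo : Summable (fun m : ℕ => x ^ m) := summable_geometric_of_lt_one hx0 hx1
    have hsum : Summable (fun m : ℕ => aSeq m * x ^ m) := by
      apply Summable.of_nonneg_of_le
        (fun m => mul_nonneg (aSeq_pos m).le (pow_nonneg hx0 m))
        (fun m => mul_le_mul_of_nonneg_right (aSeq_le_zero m) (pow_nonneg hx0 m))
      exact hgeo.mul_left _
    have hle : ∑' m : ℕ, aSeq m * x ^ m ≤ ∑' m : ℕ, aSeq 0 * x ^ m := by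
      apply Summable.tsum_le_tsum _ hsum (hgeo.mul_left _)
      exact fun m => mul_le_mul_of_nonneg_right (aSeq_le_zero m) (pow_nonneg hx0 m)
    have heq : ∑' m : ℕ, aSeq 0 * x ^ m = aSeq 0 * (1 - x)⁻¹ := by
      rw [tsum_mul_left, tsum_geometric_of_lt_one hx0 hx1]
    calc (1 - x) * ∑' m : ℕ, aSeq m * x ^ m
        ≤ (1 - x) * (aSeq 0 * (1 - x)⁻¹) := by
          rw [← heq]; exact mul_le_mul_of_nonneg_left hle (by linarith)
      _ = aSeq 0 := by
          have hne : (1 : ℝ) - x ≠ 0 := by linarith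
          field_simp
  · unfold aSeq; norm_num
  · unfold aSeq
    have h32 : Real.Gamma (3/2) = Real.sqrt π / 2 := by
      have : (3/2 : ℝ) = 1/2 + 1 := by norm_num
      rw [this, Real.Gamma_add_one (by norm_num), Real.Gamma_one_half_eq]
      ring
    have : ((0 : ℕ) : ℝ) + 1/2 = 1/2 := by norm_num
    rw [this]
    have : ((0 : ℕ) : ℝ) + 3/2 = 3/2 := by norm_num
    rw [this, h32, Real.Gamma_one_half_eq]
    rw [Nat.factorial_zero]
    have : Real.sqrt π * Real.sqrt π = π := Real.mul_self_sqrt Real.pi_pos.le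
    norm_num
    nlinarith [this]
end

section
/- For real β > 0 and integer m ≥ 0, Σ_{k=0}^∞ [C(β+k-1, k)]² · k! / Γ(k + 2β + m + 1/2) = Γ(m+1/2) / Γ(m + β + 1/2)², where C(β+k-1,k) = (β)_k/k! is the generalized binomial coefficient (here β = (n+α+1)/2, so 2β = n+α+1). -/
open Real

/-- Pochhammer symbol `(a)_k = a(a+1)⋯(a+k-1)` for real `a`. -/
noncomputable def poch (a : ℝ) (k : ℕ) : ℝ := (ascPochhammer ℝ k).eval a

/-!
Expand `(1 - t) ^ (-a)` in its binomial series `∑ (a)_k / k! t ^ k`, multiply by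
`t ^ (s - 1) (1 - t) ^ (c - 1)` and integrate over `(0, 1)`. Every term is a Beta integral,
`B(k + s, c) = (s)_k Γ(s) Γ(c) / Γ(k + s + c)`, and so is the integral of the sum, `B(s, c - a)`;
termwise integration is legitimate because all terms are nonnegative. This is Gauss's evaluation
of `₂F₁(a, s; s + c; 1)`, and the theorem is the case `a = s = β`, `c = m + β + 1/2`.
-/

open Set MeasureTheory

lemma poch_succ (a : ℝ) (k : ℕ) : poch a (k + 1) = poch a k * (a + k) := by
  simp [poch, ascPochhammer_succ_eval]

lemma poch_nonneg {a : ℝ} (ha : 0 ≤ a) (k : ℕ) : 0 ≤ poch a k := by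
  induction k with
  | zero => simp [poch]
  | succ k ih => rw [poch_succ]; positivity

lemma Real.Gamma_natCast_add_eq_poch_mul {s : ℝ} (hs : 0 < s) (k : ℕ) :
    Gamma (k + s) = poch s k * Gamma s := by
  induction k with
  | zero => simp [poch]
  | succ k ih =>
    rw [Nat.cast_succ, add_right_comm, Gamma_add_one (by positivity), ih, poch_succ]
    ring

lemma Ring.choose_add_sub_one_eq_poch_div_factorial (a : ℝ) (n : ℕ) :
    Ring.choose (a + n - 1) n = poch a n / n.factorial := by
  rw [Ring.choose_eq_smul, Polynomial.descPochhammer_smeval_eq_ascPochhammer,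
    Polynomial.ascPochhammer_smeval_eq_eval, poch, smul_eq_mul, inv_mul_eq_div]
  ring_nf

lemma hasSum_poch_div_factorial_mul_pow (a : ℝ) {t : ℝ} (ht : |t| < 1) :
    HasSum (fun n : ℕ => poch a n / n.factorial * t ^ n) ((1 - t) ^ (-a)) := by
  have h := (one_div_one_sub_rpow_hasFPowerSeriesOnBall_zero a).hasSum
    (y := t) (by simpa [enorm_eq_nnnorm, ← NNReal.coe_lt_coe] using ht)
  simpa [FormalMultilinearSeries.ofScalars_apply_eq, mul_comm,
    Ring.choose_add_sub_one_eq_poch_div_factorial,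
    rpow_neg (sub_nonneg.2 (abs_lt.1 ht).2.le)] using h

lemma hasSum_poch_div_factorial_mul_rpow_mul_rpow {a s c t : ℝ} (ht : t ∈ Ioo (0 : ℝ) 1) :
    HasSum (fun k : ℕ => poch a k / k.factorial * (t ^ ((k + s) - 1) * (1 - t) ^ (c - 1)))
      (t ^ (s - 1) * (1 - t) ^ ((c - a) - 1)) := by
  obtain ⟨ht0, ht1⟩ := ht
  have h := (hasSum_poch_div_factorial_mul_pow a (abs_lt.2 ⟨by linarith, ht1⟩)).mul_right
    (t ^ (s - 1) * (1 - t) ^ (c - 1))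
  have sum : (1 - t) ^ (-a) * (t ^ (s - 1) * (1 - t) ^ (c - 1)) =
      t ^ (s - 1) * (1 - t) ^ ((c - a) - 1) := by
    rw [mul_left_comm, ← rpow_add (by linarith)]
    ring_nf
  refine sum ▸ h.congr_fun fun k => ?_
  rw [add_sub_assoc, rpow_add ht0, rpow_natCast]
  ring

lemma cpow_mul_one_sub_cpow_ofReal {a b x : ℝ} (hx : x ∈ Icc (0 : ℝ) 1) :
    (x : ℂ) ^ ((a : ℂ) - 1) * (1 - (x : ℂ)) ^ ((b : ℂ) - 1) =
      ((x ^ (a - 1) * (1 - x) ^ (b - 1) : ℝ) : ℂ) := by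
  rw [Complex.ofReal_mul, Complex.ofReal_cpow hx.1, Complex.ofReal_cpow (sub_nonneg.2 hx.2)]
  push_cast
  rfl

lemma intervalIntegrable_rpow_mul_one_sub_rpow {a b : ℝ} (ha : 0 < a) (hb : 0 < b) :
    IntervalIntegrable (fun t => t ^ (a - 1) * (1 - t) ^ (b - 1)) volume 0 1 := by
  have h := (Complex.betaIntegral_convergent (u := a) (v := b) (by simpa) (by simpa)).norm
  refine h.congr fun x hx => ?_
  rw [uIoc_of_le zero_le_one] at hx
  simp only [cpow_mul_one_sub_cpow_ofReal (Ioc_subset_Icc_self hx), Complex.norm_real,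
    Real.norm_eq_abs]
  exact abs_of_nonneg
    (mul_nonneg (rpow_nonneg hx.1.le _) (rpow_nonneg (sub_nonneg.2 hx.2) _))

lemma integral_rpow_mul_one_sub_rpow {a b : ℝ} (ha : 0 < a) (hb : 0 < b) :
    ∫ t in (0 : ℝ)..1, t ^ (a - 1) * (1 - t) ^ (b - 1) = Gamma a * Gamma b / Gamma (a + b) := by
  have hB : Complex.betaIntegral a b =
      ↑(∫ t in (0 : ℝ)..1, t ^ (a - 1) * (1 - t) ^ (b - 1)) := by
    rw [Complex.betaIntegral, ← intervalIntegral.integral_ofReal]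
    exact intervalIntegral.integral_congr fun x hx =>
      cpow_mul_one_sub_cpow_ofReal (by rwa [uIcc_of_le zero_le_one] at hx)
  have h := Complex.Gamma_mul_Gamma_eq_betaIntegral (s := a) (t := b) (by simpa) (by simpa)
  rw [hB, ← Complex.ofReal_add, Complex.Gamma_ofReal, Complex.Gamma_ofReal,
    Complex.Gamma_ofReal, ← Complex.ofReal_mul, ← Complex.ofReal_mul, Complex.ofReal_inj] at h
  rw [h, mul_div_cancel_left₀ _ (Gamma_pos_of_pos (add_pos ha hb)).ne']

theorem MeasureTheory.hasSum_integral_of_nonneg {α ι : Type*} [MeasurableSpace α]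
    {μ : Measure α} [Countable ι] {F : ι → α → ℝ} {f : α → ℝ}
    (hF_meas : ∀ n, AEStronglyMeasurable (F n) μ)
    (hF_nonneg : ∀ n, 0 ≤ᵐ[μ] F n) (hf : Integrable f μ)
    (h_lim : ∀ᵐ x ∂μ, HasSum (fun n => F n x) (f x)) :
    HasSum (fun n => ∫ x, F n x ∂μ) (∫ x, f x ∂μ) :=
  hasSum_integral_of_dominated_convergence F hF_meas
    (fun n => (hF_nonneg n).mono fun _ hx => (Real.norm_of_nonneg hx).le)
    (h_lim.mono fun _ hx => hx.summable) (hf.congr (h_lim.mono fun _ hx => hx.tsum_eq.symm))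
    h_lim

theorem hasSum_poch_mul_poch_div_factorial_mul_Gamma {a s c : ℝ} (ha : 0 ≤ a) (hs : 0 < s)
    (hac : a < c) :
    HasSum (fun k : ℕ => poch a k * poch s k / (k.factorial * Gamma (k + s + c)))
      (Gamma (c - a) / (Gamma c * Gamma (s + c - a))) := by
  have hc : 0 < c := ha.trans_lt hac
  have integral_Ioo (f : ℝ → ℝ) : ∫ t in (0 : ℝ)..1, f t = ∫ t in Ioo 0 1, f t := by
    rw [intervalIntegral.integral_of_le zero_le_one, integral_Ioc_eq_integral_Ioo]
  set F : ℕ → ℝ → ℝ := fun k t =>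
    poch a k / k.factorial * (t ^ ((k + s) - 1) * (1 - t) ^ (c - 1))
  have integral_F (k : ℕ) : ∫ t in Ioo 0 1, F k t =
      Gamma s * Gamma c * (poch a k * poch s k / (k.factorial * Gamma (k + s + c))) := by
    have hks : 0 < k + s := by positivity
    rw [integral_const_mul, ← integral_Ioo, integral_rpow_mul_one_sub_rpow hks hc,
      Gamma_natCast_add_eq_poch_mul hs]
    field_simp
  have h := hasSum_integral_of_nonneg (μ := volume.restrict (Ioo 0 1)) (F := F)
    (fun k => by fun_prop)
    (fun k => (ae_restrict_mem measurableSet_Ioo).mono fun t ht =>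
      mul_nonneg (div_nonneg (poch_nonneg ha k) k.factorial.cast_nonneg)
        (mul_nonneg (rpow_nonneg ht.1.le _) (rpow_nonneg (sub_nonneg.2 ht.2.le) _)))
    ((intervalIntegrable_rpow_mul_one_sub_rpow hs (sub_pos.2 hac)).1.mono_set Ioo_subset_Ioc_self)
    ((ae_restrict_mem measurableSet_Ioo).mono fun _ ↦ hasSum_poch_div_factorial_mul_rpow_mul_rpow)
  simp only [integral_F, ← integral_Ioo, integral_rpow_mul_one_sub_rpow hs (sub_pos.2 hac)] at h
  have value : Gamma s * Gamma (c - a) / Gamma (s + (c - a)) =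
      Gamma s * Gamma c * (Gamma (c - a) / (Gamma c * Gamma (s + c - a))) := by
    rw [← add_sub_assoc]
    field_simp [(Gamma_pos_of_pos hc).ne']
  rw [value] at h
  exact (hasSum_mul_left_iff (mul_pos (Gamma_pos_of_pos hs) (Gamma_pos_of_pos hc)).ne').1 h

theorem gauss_sum_binom_sq (β : ℝ) (hβ : β > 0) (m : ℕ) :
    ∑' k : ℕ, (poch β k / (Nat.factorial k : ℝ))^2 * (Nat.factorial k : ℝ) /
        Real.Gamma (k + 2*β + m + 1/2) =
      Real.Gamma (m + 1/2) / (Real.Gamma (m + β + 1/2))^2 := by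
  have h := hasSum_poch_mul_poch_div_factorial_mul_Gamma (c := m + β + 1/2) hβ.le hβ
    (by linarith [(by positivity : (0 : ℝ) < m + 1/2)])
  have summand (k : ℕ) :
      (poch β k / k.factorial) ^ 2 * k.factorial / Gamma (k + 2*β + m + 1/2) =
      poch β k * poch β k / (k.factorial * Gamma (k + β + (m + β + 1/2))) := by
    rw [show (k : ℝ) + β + (m + β + 1/2) = k + 2*β + m + 1/2 by ring]
    field_simp
  have value :
      Gamma ((m + β + 1/2) - β) / (Gamma (m + β + 1/2) * Gamma (β + (m + β + 1/2) - β)) =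
      Gamma (m + 1/2) / Gamma (m + β + 1/2) ^ 2 := by
    ring_nf
  exact (value ▸ h.congr_fun summand).tsum_eq
end
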